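/- Let X and Y be local dendrites each containing a common subcontinuum G that contains every simple closed curve of X and every simple closed curve of Y, and let r_X : X → G and r_Y : Y → G be the canonical retractions. Suppose that for each g ∈ G we are given a topological embedding f_g : r_X⁻¹(g) → r_Y⁻¹(g) with f_g(g) = g. Then the map f : X → Y defined by f(x) = f_{r_X(x)}(x) is a topological embedding restricting to the identity on G, and f is the unique topological embedding X → Y restricting to the identity on G whose restriction to r_X⁻¹(g) equals f_g for every g ∈ G. -/

import Mathlib

open Topology

/-- A continuum: a nonempty compact connected metrizable topological space. -/
def IsContinuum (X : Type*) [TopologicalSpace X] : Prop :=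
  Nonempty X ∧ CompactSpace X ∧ ConnectedSpace X ∧ TopologicalSpace.MetrizableSpace X

/-- A simple closed curve in `X`: a subspace homeomorphic to the circle. -/
def IsSimpleClosedCurve {X : Type*} [TopologicalSpace X] (S : Set X) : Prop :=
  Nonempty (S ≃ₜ AddCircle (1 : ℝ))

/-- A dendrite: a locally connected continuum containing no simple closed curve. -/
def IsDendrite (X : Type*) [TopologicalSpace X] : Prop :=
  IsContinuum X ∧ LocallyConnectedSpace X ∧ ∀ S : Set X, ¬ IsSimpleClosedCurve S

/-- A local dendrite: a continuum each of whose points has a neighborhood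
that is a dendrite. -/
def IsLocalDendrite (X : Type*) [TopologicalSpace X] : Prop :=
  IsContinuum X ∧ ∀ x : X, ∃ N : Set X, N ∈ 𝓝 x ∧ IsDendrite N

/-- A branch point of `X`: a point whose complement has at least three
connected components. -/
def IsBranchPoint {X : Type*} [TopologicalSpace X] (x : X) : Prop :=
  ∃ u v w : ConnectedComponents (↥({x}ᶜ : Set X)), u ≠ v ∧ u ≠ w ∧ v ≠ w

/-- `X ∖ {x}` has countably infinitely many connected components
(i.e. there are ℵ₀ branches at `x`). -/
def HasAlephNullBranchesAt (X : Type*) [TopologicalSpace X] (x : X) : Prop :=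
  Countable (ConnectedComponents (↥({x}ᶜ : Set X))) ∧
    Infinite (ConnectedComponents (↥({x}ᶜ : Set X)))


/-- The canonical retraction of `X` onto `G`: the identity on `G`, sending each connected
component `C` of `X ∖ G` to the unique point of `closure C ∩ G`. -/
def IsCanonicalRetraction {X : Type*} [TopologicalSpace X] (G : Set X) (r : X → X) :
    Prop :=
  (∀ g ∈ G, r g = g) ∧
  ∀ x : X, x ∉ G → r x ∈ G ∧ closure (connectedComponentIn Gᶜ x) ∩ G = {r x}

section AuxiliaryLemmas

open Set Metric Filter


variable {Z : Type*}

theorem aux_inter_frontier [TopologicalSpace Z] {K C : Set Z} (hC : IsOpen C)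
    (hK : IsPreconnected K) (h1 : (K ∩ C).Nonempty) (h2 : (K \ C).Nonempty) :
    (K ∩ frontier C).Nonempty := by
  by_contra h
  rw [Set.not_nonempty_iff_eq_empty] at h
  have hfr : ∀ z ∈ K, z ∉ frontier C := fun z hz hzf =>
    (Set.eq_empty_iff_forall_notMem.mp h z) ⟨hz, hzf⟩
  have hcov : K ⊆ C ∪ (closure C)ᶜ := by
    intro z hz
    by_cases hzC : z ∈ C
    · exact Or.inl hzC
    · refine Or.inr fun hzcl => hfr z hz ?_
      rw [hC.frontier_eq]; exact ⟨hzcl, hzC⟩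
  obtain ⟨p, hpK, hpC⟩ := h2
  have h2' : (K ∩ (closure C)ᶜ).Nonempty := by
    refine ⟨p, hpK, fun hpcl => hfr p hpK ?_⟩
    rw [hC.frontier_eq]; exact ⟨hpcl, hpC⟩
  obtain ⟨q, -, hq1, hq2⟩ := hK C (closure C)ᶜ hC isClosed_closure.isOpen_compl hcov h1 h2'
  exact hq2 (subset_closure hq1)

theorem aux_locallyConnected [TopologicalSpace Z]
    (h : ∀ z : Z, ∃ N : Set Z, N ∈ 𝓝 z ∧ LocallyConnectedSpace ↥N) :
    LocallyConnectedSpace Z := by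
  rw [locallyConnectedSpace_iff_connected_subsets]
  intro x U hU
  obtain ⟨N, hN, hNlc⟩ := h x
  have hxN : x ∈ N := mem_of_mem_nhds hN
  have hW : (Subtype.val ⁻¹' (U ∩ interior N) : Set N) ∈ 𝓝 (⟨x, hxN⟩ : N) :=
    continuous_subtype_val.continuousAt.preimage_mem_nhds
      (Filter.inter_mem hU (interior_mem_nhds.mpr hN))
  obtain ⟨V', hV'n, hV'c, hV's⟩ :=
    locallyConnectedSpace_iff_connected_subsets.mp hNlc ⟨x, hxN⟩ _ hW
  obtain ⟨W, hWn, hWs⟩ := (mem_nhds_subtype N ⟨x, hxN⟩ V').mp hV'n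
  refine ⟨Subtype.val '' V', ?_, hV'c.image _ continuous_subtype_val.continuousOn, ?_⟩
  · refine Filter.mem_of_superset (Filter.inter_mem hWn (interior_mem_nhds.mpr hN)) ?_
    rintro z ⟨hzW, hzN⟩
    exact ⟨⟨z, interior_subset hzN⟩, hWs hzW, rfl⟩
  · rintro _ ⟨v, hv, rfl⟩
    exact (hV's hv).1

theorem aux_ulc [MetricSpace Z] [CompactSpace Z] [LocallyConnectedSpace Z]
    {ε : ℝ} (hε : 0 < ε) :
    ∃ δ > 0, ∀ x y : Z, dist x y < δ →
      ∃ K : Set Z, IsPreconnected K ∧ x ∈ K ∧ y ∈ K ∧ Metric.diam K ≤ ε := by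
  classical
  have hV : ∀ z : Z, ∃ V : Set Z, V ∈ 𝓝 z ∧ IsPreconnected V ∧ V ⊆ Metric.ball z (ε/4) :=
    fun z => locallyConnectedSpace_iff_connected_subsets.mp ‹_› z _
      (Metric.ball_mem_nhds z (by positivity))
  choose V hVn hVc hVb using hV
  obtain ⟨t, htcov⟩ := isCompact_univ.elim_finite_subcover (fun z => interior (V z))
    (fun z => isOpen_interior)
    (fun z _ => Set.mem_iUnion.mpr ⟨z, mem_interior_iff_mem_nhds.mpr (hVn z)⟩)
  set F : Z → Set Z := fun z => closure (V z) with hF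
  have hFc : ∀ z, IsPreconnected (F z) := fun z => (hVc z).closure
  have hFne : ∀ z, (F z).Nonempty := fun z => ⟨z, subset_closure (mem_of_mem_nhds (hVn z))⟩
  have hFd : ∀ z, Metric.diam (F z) ≤ ε/2 := by
    intro z
    have : Metric.diam (F z) = Metric.diam (V z) := Metric.diam_closure (V z)
    rw [this]
    calc Metric.diam (V z) ≤ Metric.diam (Metric.ball z (ε/4)) :=
          Metric.diam_mono (hVb z) Metric.isBounded_ball
      _ ≤ 2 * (ε/4) := Metric.diam_ball (by positivity)
      _ ≤ ε/2 := by linarith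
  have hsep : ∀ a b : Z, (F a ∩ F b) = ∅ →
      ∃ m : ℝ, 0 < m ∧ ∀ x ∈ F a, ∀ y ∈ F b, m ≤ dist x y := by
    intro a b hab
    have hFa : IsCompact (F a) := isClosed_closure.isCompact
    obtain ⟨x₀, hx₀, hx₀min⟩ := hFa.exists_isMinOn (hFne a)
      (Metric.continuous_infDist_pt (F b)).continuousOn
    have hx₀nb : x₀ ∉ F b := fun hmem => (Set.eq_empty_iff_forall_notMem.mp hab x₀) ⟨hx₀, hmem⟩
    have hm : 0 < Metric.infDist x₀ (F b) :=
      (IsClosed.notMem_iff_infDist_pos isClosed_closure (hFne b)).mp hx₀nb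
    exact ⟨_, hm, fun x hx y hy =>
      le_trans (hx₀min hx) (Metric.infDist_le_dist_of_mem hy)⟩
  let m : Z × Z → ℝ := fun p =>
    if h : (F p.1 ∩ F p.2) = ∅ then (hsep p.1 p.2 h).choose else 1
  have hm1 : ∀ p : Z × Z, (F p.1 ∩ F p.2) = ∅ → 0 < m p := by
    intro p hp
    simp only [m, dif_pos hp]
    exact (hsep p.1 p.2 hp).choose_spec.1
  have hm2 : ∀ p : Z × Z, (h : (F p.1 ∩ F p.2) = ∅) →
      ∀ x ∈ F p.1, ∀ y ∈ F p.2, m p ≤ dist x y := by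
    intro p hp
    simp only [m, dif_pos hp]
    exact (hsep p.1 p.2 hp).choose_spec.2
  set P := (t ×ˢ t).filter (fun p : Z × Z => (F p.1 ∩ F p.2) = ∅) with hPdef
  obtain ⟨δ, hδpos, hδle⟩ : ∃ δ : ℝ, 0 < δ ∧ ∀ p ∈ P, δ ≤ m p := by
    by_cases hPne : P.Nonempty
    · refine ⟨P.inf' hPne m, ?_, fun p hp => Finset.inf'_le m hp⟩
      rw [Finset.lt_inf'_iff]
      intro p hp
      exact hm1 p (Finset.mem_filter.mp hp).2
    · exact ⟨1, one_pos, fun p hp => absurd ⟨p, hp⟩ hPne⟩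
  refine ⟨δ, hδpos, fun x y hxy => ?_⟩
  obtain ⟨a, hat, hxa⟩ := Set.mem_iUnion₂.mp (htcov (Set.mem_univ x))
  obtain ⟨b, hbt, hyb⟩ := Set.mem_iUnion₂.mp (htcov (Set.mem_univ y))
  have hxFa : x ∈ F a := subset_closure (interior_subset hxa)
  have hyFb : y ∈ F b := subset_closure (interior_subset hyb)
  have hne : (F a ∩ F b) ≠ ∅ := by
    intro hab
    have hPmem : (a, b) ∈ P :=
      Finset.mem_filter.mpr ⟨Finset.mem_product.mpr ⟨hat, hbt⟩, hab⟩
    have h1 : δ ≤ m (a, b) := hδle _ hPmem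
    have h2 : m (a, b) ≤ dist x y := hm2 (a, b) hab x hxFa y hyFb
    linarith
  obtain ⟨p, hp⟩ := Set.nonempty_iff_ne_empty.mpr hne
  refine ⟨F a ∪ F b, IsPreconnected.union p hp.1 hp.2 (hFc a) (hFc b),
    Or.inl hxFa, Or.inr hyFb, ?_⟩
  calc Metric.diam (F a ∪ F b) ≤ Metric.diam (F a) + Metric.diam (F b) :=
        Metric.diam_union' ⟨p, hp⟩
    _ ≤ ε := by linarith [hFd a, hFd b]

/-- If a preconnected set contains a point of the component of `z` in `Gᶜ` and a point
outside of it, then it contains the attach point of that component. -/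
theorem aux_attach_mem [TopologicalSpace Z] [LocallyConnectedSpace Z]
    {G : Set Z} (hGc : IsClosed G) {z a : Z} (hz : z ∉ G)
    (hattach : closure (connectedComponentIn Gᶜ z) ∩ G = {a})
    {K : Set Z} (hK : IsPreconnected K) (hzK : z ∈ K) {p : Z}
    (hpK : p ∈ K) (hp : p ∉ connectedComponentIn Gᶜ z) : a ∈ K := by
  set C := connectedComponentIn Gᶜ z with hCdef
  have hCo : IsOpen C := hGc.isOpen_compl.connectedComponentIn
  have hzC : z ∈ C := mem_connectedComponentIn hz
  have hT : IsPreconnected (closure C ∩ Gᶜ) :=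
    (isPreconnected_connectedComponentIn).subset_closure
      (subset_inter subset_closure (connectedComponentIn_subset Gᶜ z)) inter_subset_left
  have hTC : closure C ∩ Gᶜ ⊆ C :=
    hT.subset_connectedComponentIn ⟨subset_closure hzC, (connectedComponentIn_subset Gᶜ z) hzC⟩
      inter_subset_right
  obtain ⟨q, hqK, hqf⟩ := aux_inter_frontier hCo hK ⟨z, hzK, hzC⟩ ⟨p, hpK, hp⟩
  rw [hCo.frontier_eq] at hqf
  have hqG : q ∈ G := by
    by_contra hqG
    exact hqf.2 (hTC ⟨hqf.1, hqG⟩)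
  have : q ∈ closure C ∩ G := ⟨hqf.1, hqG⟩
  rw [hattach] at this
  rwa [← this]

/-- Near a point of `G`, the retraction moves points only a little. -/
theorem aux_retract_close [MetricSpace Z] [CompactSpace Z] [LocallyConnectedSpace Z]
    {G : Set Z} (hGc : IsClosed G) {r : Z → Z}
    (hrfix : ∀ g ∈ G, r g = g)
    (hr : ∀ z, z ∉ G → closure (connectedComponentIn Gᶜ z) ∩ G = {r z})
    {ε : ℝ} (hε : 0 < ε) :
    ∃ δ > 0, ∀ x : Z, ∀ p ∈ G, dist x p < δ → dist (r x) p ≤ ε := by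
  obtain ⟨δ, hδpos, hδ⟩ := aux_ulc (Z := Z) hε
  refine ⟨min δ ε, lt_min hδpos hε, fun x p hp hd => ?_⟩
  by_cases hxG : x ∈ G
  · rw [hrfix x hxG]
    exact le_of_lt (lt_of_lt_of_le hd (min_le_right _ _))
  · obtain ⟨K, hKc, hxK, hpK, hKd⟩ := hδ x p (lt_of_lt_of_le hd (min_le_left _ _))
    have hpC : p ∉ connectedComponentIn Gᶜ x := fun hmem =>
      (connectedComponentIn_subset Gᶜ x hmem) hp
    have hrK : r x ∈ K := aux_attach_mem hGc hxG (hr x hxG) hKc hxK hpK hpC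
    have hbd : Bornology.IsBounded K := (isCompact_univ.isBounded).subset (subset_univ K)
    exact (Metric.dist_le_diam_of_mem hbd hrK hpK).trans hKd

/-- Null-sequence property: components attached near (but not at) `q₀` are uniformly small. -/
theorem aux_small_components [MetricSpace Z] [CompactSpace Z] [LocallyConnectedSpace Z]
    {G : Set Z} (hGc : IsClosed G) {r : Z → Z}
    (hr : ∀ z, z ∉ G → closure (connectedComponentIn Gᶜ z) ∩ G = {r z})
    (q₀ : Z) {ε : ℝ} (hε : 0 < ε) :
    ∃ δ > 0, ∀ y, y ∉ G → r y ≠ q₀ → dist (r y) q₀ < δ → dist y (r y) ≤ ε := by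
  by_contra hcon
  push_neg at hcon
  have hcon' : ∀ δ : ℝ, 0 < δ → ∃ y, y ∉ G ∧ r y ≠ q₀ ∧ dist (r y) q₀ < δ ∧ ε < dist y (r y) := by
    intro δ hδ
    obtain ⟨y, h1, h2, h3, h4⟩ := hcon δ hδ
    exact ⟨y, h1, h2, h3, h4⟩
  obtain ⟨δu, hδu, hU⟩ := aux_ulc (Z := Z) hε
  have hpos : ∀ n : ℕ, (0:ℝ) < 1 / (n + 1) := fun n => by positivity
  choose y hy1 hy2 hy3 hy4 using fun n : ℕ => hcon' (1 / (n + 1)) (hpos n)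
  obtain ⟨t, -, htfin, htcov⟩ := finite_cover_balls_of_compact
    (isCompact_univ : IsCompact (Set.univ : Set Z)) (by positivity : (0:ℝ) < δu / 2)
  choose c hc1 hc2 using fun n : ℕ => Set.mem_iUnion₂.mp (htcov (Set.mem_univ (y n)))
  haveI : Finite ↥t := htfin
  obtain ⟨b, hb⟩ := Finite.exists_infinite_fiber (fun n : ℕ => (⟨c n, hc1 n⟩ : ↥t))
  have hI : ((fun n : ℕ => (⟨c n, hc1 n⟩ : ↥t)) ⁻¹' {b}).Infinite := by
    rw [← Set.infinite_coe_iff]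
    exact hb
  have hIc : ∀ n ∈ (fun n : ℕ => (⟨c n, hc1 n⟩ : ↥t)) ⁻¹' {b}, c n = ↑b := by
    intro n hn
    exact congrArg Subtype.val (Set.mem_singleton_iff.mp hn)
  obtain ⟨k, hk'⟩ := hI.nonempty
  have hk : c k = ↑b := hIc k hk'
  have hρ : 0 < dist (r (y k)) q₀ := dist_pos.mpr (hy2 k)
  obtain ⟨n₀, hn₀⟩ := exists_nat_one_div_lt hρ
  obtain ⟨l, hl', hln₀⟩ := hI.exists_gt n₀
  have hl : c l = ↑b := hIc l hl'
  -- attach points differ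
  have hal : dist (r (y l)) q₀ < dist (r (y k)) q₀ := by
    have h1 : dist (r (y l)) q₀ < 1 / (l + 1) := hy3 l
    have h2 : (1:ℝ) / (l + 1) ≤ 1 / (n₀ + 1) := by
      apply one_div_le_one_div_of_le
      · positivity
      · exact_mod_cast Nat.succ_le_succ hln₀.le
    linarith
  have hane : r (y l) ≠ r (y k) := fun h => by rw [h] at hal; exact lt_irrefl _ hal
  -- distinct components
  have hcomp : y l ∉ connectedComponentIn Gᶜ (y k) := by
    intro hmem
    have heq : connectedComponentIn Gᶜ (y l) = connectedComponentIn Gᶜ (y k) :=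
      (connectedComponentIn_eq hmem).symm
    have h1 := hr (y l) (hy1 l)
    have h2 := hr (y k) (hy1 k)
    rw [heq, h2] at h1
    exact hane (Set.singleton_eq_singleton_iff.mp h1.symm)
  -- points close
  have hclose : dist (y k) (y l) < δu := by
    have h1 : dist (y k) ↑b < δu / 2 := by
      have := hc2 k
      rw [hk] at this
      exact Metric.mem_ball.mp this
    have h2 : dist (y l) ↑b < δu / 2 := by
      have := hc2 l
      rw [hl] at this
      exact Metric.mem_ball.mp this
    calc dist (y k) (y l) ≤ dist (y k) ↑b + dist (y l) ↑b := dist_triangle_right _ _ _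
      _ < δu := by linarith
  obtain ⟨K, hKc, hkK, hlK, hKd⟩ := hU (y k) (y l) hclose
  have hrK : r (y k) ∈ K := aux_attach_mem hGc (hy1 k) (hr (y k) (hy1 k)) hKc hkK hlK hcomp
  have hbd : Bornology.IsBounded K := (isCompact_univ.isBounded).subset (subset_univ K)
  have : dist (y k) (r (y k)) ≤ ε := (Metric.dist_le_diam_of_mem hbd hkK hrK).trans hKd
  exact absurd this (not_le.mpr (hy4 k))


end AuxiliaryLemmas

/-- Let `X`, `Y` be local dendrites containing a common subcontinuum `G`
(identified via a homeomorphism `e : GX ≃ₜ GY`) containing all simple closed curves of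
both, with canonical retractions `rX`, `rY`. Given pointed embeddings `fg g` between the
corresponding fibers for all `g ∈ G`, there is a unique embedding `f : X → Y` restricting
to the identity on `G` (i.e. to `e`) whose restriction to each fiber `rX⁻¹(g)` is `fg g`;
it is given by `f x = fg (rX x) x`. -/


theorem exists_unique_embedding_extending_fiber_embeddings
    {X : Type u} {Y : Type v} [TopologicalSpace X] [TopologicalSpace Y]
    (hX : IsLocalDendrite X) (hY : IsLocalDendrite Y)
    (GX : Set X) (GY : Set Y) (hGX : IsContinuum GX) (hGY : IsContinuum GY)
    (e : GX ≃ₜ GY)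
    (hsccX : ∀ S : Set X, IsSimpleClosedCurve S → S ⊆ GX)
    (hsccY : ∀ S : Set Y, IsSimpleClosedCurve S → S ⊆ GY)
    (rX : X → X) (hrX : IsCanonicalRetraction GX rX)
    (rY : Y → Y) (hrY : IsCanonicalRetraction GY rY)
    (fg : ∀ g : GX, ↥(rX ⁻¹' {(g : X)}) → ↥(rY ⁻¹' {(↑(e g) : Y)}))
    (hfg : ∀ g : GX, Topology.IsEmbedding (fg g))
    (hfgpt : ∀ (g : GX) (x : ↥(rX ⁻¹' {(g : X)})),
      (x : X) = (g : X) → ((fg g x : Y) = (↑(e g) : Y))) :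
    ∃! f : X → Y,
      Topology.IsEmbedding f ∧
      (∀ g : GX, f ↑g = ↑(e g)) ∧
      (∀ (g : GX) (x : ↥(rX ⁻¹' {(g : X)})), f ↑x = ↑(fg g x)) := by
  classical
  -- instances
  haveI : CompactSpace X := hX.1.2.1
  haveI : CompactSpace Y := hY.1.2.1
  haveI : TopologicalSpace.MetrizableSpace X := hX.1.2.2.2
  haveI : TopologicalSpace.MetrizableSpace Y := hY.1.2.2.2
  haveI hlcX : LocallyConnectedSpace X :=
    aux_locallyConnected fun z => (hX.2 z).imp fun N hN => ⟨hN.1, hN.2.2.1⟩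
  haveI hlcY : LocallyConnectedSpace Y :=
    aux_locallyConnected fun z => (hY.2 z).imp fun N hN => ⟨hN.1, hN.2.2.1⟩
  letI : MetricSpace X := TopologicalSpace.metrizableSpaceMetric X
  letI : MetricSpace Y := TopologicalSpace.metrizableSpaceMetric Y
  have hGXcl : IsClosed GX := (isCompact_iff_compactSpace.mpr hGX.2.1).isClosed
  have hGYcl : IsClosed GY := (isCompact_iff_compactSpace.mpr hGY.2.1).isClosed
  have hr2X : ∀ z, z ∉ GX → closure (connectedComponentIn GXᶜ z) ∩ GX = {rX z} :=
    fun z hz => (hrX.2 z hz).2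
  have hr2Y : ∀ z, z ∉ GY → closure (connectedComponentIn GYᶜ z) ∩ GY = {rY z} :=
    fun z hz => (hrY.2 z hz).2
  -- the retraction lands in GX
  have rmem : ∀ x : X, rX x ∈ GX := by
    intro x
    by_cases h : x ∈ GX
    · rw [hrX.1 x h]; exact h
    · exact (hrX.2 x h).1
  set gX : X → GX := fun x => ⟨rX x, rmem x⟩ with hgXdef
  have hfibself : ∀ x : X, x ∈ rX ⁻¹' {(gX x : X)} := fun x => rfl
  set F : X → Y := fun x => ↑(fg (gX x) ⟨x, hfibself x⟩) with hFdef
  -- congruence for fg across an equality of base points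
  have congrfg : ∀ (g g' : GX), g = g' → ∀ (xx : ↥(rX ⁻¹' {(g : X)}))
      (m : (↑xx : X) ∈ rX ⁻¹' {(g' : X)}),
      (↑(fg g xx) : Y) = ↑(fg g' ⟨↑xx, m⟩) := by
    rintro g g' rfl xx m
    rfl
  -- key value property (property 3)
  have key3 : ∀ (g : GX) (x : ↥(rX ⁻¹' {(g : X)})), F ↑x = ↑(fg g x) := by
    intro g x
    have hgx : gX ↑x = g := Subtype.ext x.2
    have h1 := congrfg (gX ↑x) g hgx ⟨↑x, hfibself ↑x⟩ x.2
    have h2 : (⟨(↑x : X), x.2⟩ : ↥(rX ⁻¹' {(g : X)})) = x := Subtype.ext rfl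
    exact h1.trans (by rw [h2])
  -- property 2
  have key2 : ∀ g : GX, F ↑g = ↑(e g) := by
    intro g
    have hg' : (↑g : X) ∈ rX ⁻¹' {(g : X)} := by
      simp only [Set.mem_preimage, Set.mem_singleton_iff]
      exact hrX.1 ↑g g.2
    rw [key3 g ⟨↑g, hg'⟩]
    exact hfgpt g ⟨↑g, hg'⟩ rfl
  -- F maps into the fiber over e (gX x)
  have rYF : ∀ x : X, rY (F x) = ↑(e (gX x)) := fun x => (fg (gX x) ⟨x, hfibself x⟩).2
  set EE : GX → Y := fun g => (↑(e g) : Y) with hEEdef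
  have hEEcont : Continuous EE := continuous_subtype_val.comp e.continuous
  have hEEinj : Function.Injective EE := fun a b h =>
    e.injective (Subtype.coe_injective h)
  -- injectivity
  have hinj : Function.Injective F := by
    intro x₁ x₂ h
    have h0 : (↑(e (gX x₁)) : Y) = ↑(e (gX x₂)) :=
      (rYF x₁).symm.trans ((congrArg rY h).trans (rYF x₂))
    have hg : gX x₁ = gX x₂ := e.injective (Subtype.coe_injective h0)
    have hx₂mem : x₂ ∈ rX ⁻¹' {(gX x₁ : X)} := by
      show rX x₂ = ↑(gX x₁)
      exact (congrArg Subtype.val hg).symm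
    have h1 : F x₁ = ↑(fg (gX x₁) ⟨x₁, hfibself x₁⟩) := rfl
    have h2 : F x₂ = ↑(fg (gX x₁) ⟨x₂, hx₂mem⟩) := key3 (gX x₁) ⟨x₂, hx₂mem⟩
    rw [h1, h2] at h
    have := (hfg (gX x₁)).injective (Subtype.coe_injective h)
    exact congrArg Subtype.val this
  -- continuity on each fiber
  have contfib : ∀ g : GX, ContinuousOn F (rX ⁻¹' {(g : X)}) := by
    intro g
    rw [continuousOn_iff_continuous_restrict]
    have : Set.restrict (rX ⁻¹' {(g : X)}) F = fun x => ↑(fg g x) :=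
      funext fun x => key3 g x
    change Continuous (Set.restrict (rX ⁻¹' {(g : X)}) F)
    rw [this]
    exact continuous_subtype_val.comp (hfg g).continuous
  -- continuity
  have hcont : Continuous F := by
    rw [continuous_iff_continuousAt]
    intro x₀
    by_cases hx₀ : x₀ ∈ GX
    · -- at a point of G
      set g₀ : GX := ⟨x₀, hx₀⟩ with hg₀def
      set q₀ : Y := EE g₀ with hq₀def
      have hx₀fib : x₀ ∈ rX ⁻¹' {(g₀ : X)} := by
        simp only [Set.mem_preimage, Set.mem_singleton_iff]
        exact hrX.1 x₀ hx₀
      have hFx₀ : F x₀ = q₀ := key2 g₀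
      rw [ContinuousAt, hFx₀]
      have hsplit : 𝓝 x₀ = 𝓝[rX ⁻¹' {(g₀ : X)}] x₀ ⊔ 𝓝[(rX ⁻¹' {(g₀ : X)})ᶜ] x₀ :=
        nhds_eq_nhdsWithin_sup_nhdsWithin x₀ (Set.union_compl_self _).symm
      rw [hsplit, Filter.tendsto_sup]
      constructor
      · -- within the fiber
        have := (contfib g₀).continuousWithinAt hx₀fib
        rwa [ContinuousWithinAt, hFx₀] at this
      · -- outside the fiber
        rw [Metric.tendsto_nhdsWithin_nhds]
        intro ε hε
        obtain ⟨δ₂, hδ₂pos, hδ₂⟩ :=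
          aux_small_components hGYcl hr2Y q₀ (by positivity : (0:ℝ) < ε/4)
        have hEEat : ContinuousAt EE g₀ := hEEcont.continuousAt
        rw [Metric.continuousAt_iff] at hEEat
        obtain ⟨δ₁, hδ₁pos, hδ₁⟩ := hEEat (min (ε/2) δ₂) (lt_min (by positivity) hδ₂pos)
        obtain ⟨δ₃, hδ₃pos, hδ₃⟩ :=
          aux_retract_close hGXcl hrX.1 hr2X (by positivity : (0:ℝ) < δ₁/2)
        refine ⟨δ₃, hδ₃pos, fun x hx hdist => ?_⟩
        have hrXx : dist (rX x) x₀ ≤ δ₁ / 2 := hδ₃ x x₀ hx₀ hdist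
        have hgdist : dist (gX x) g₀ < δ₁ := by
          rw [Subtype.dist_eq]
          exact lt_of_le_of_lt hrXx (by linarith)
        have h2 : dist (EE (gX x)) q₀ < min (ε/2) δ₂ := hδ₁ hgdist
        have hne' : EE (gX x) ≠ q₀ := by
          intro h
          apply hx
          have : gX x = g₀ := hEEinj h
          simp only [Set.mem_preimage, Set.mem_singleton_iff]
          exact congrArg Subtype.val this
        by_cases hFG : F x ∈ GY
        · have hfix : rY (F x) = F x := hrY.1 (F x) hFG
          have : F x = EE (gX x) := by rw [← hfix, rYF]
          rw [this]
          exact lt_of_lt_of_le h2 (le_trans (min_le_left _ _) (by linarith))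
        · have hsc : dist (F x) (rY (F x)) ≤ ε/4 := by
            apply hδ₂ (F x) hFG
            · rw [rYF]; exact hne'
            · rw [rYF]; exact lt_of_lt_of_le h2 (min_le_right _ _)
          have htr : dist (F x) q₀ ≤ dist (F x) (rY (F x)) + dist (rY (F x)) q₀ :=
            dist_triangle _ _ _
          have h3 : dist (rY (F x)) q₀ < ε/2 := by
            rw [rYF]
            exact lt_of_lt_of_le h2 (min_le_left _ _)
          linarith
    · -- at a point outside G
      set C := connectedComponentIn GXᶜ x₀ with hCdef
      have hCo : IsOpen C := hGXcl.isOpen_compl.connectedComponentIn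
      have hx₀C : x₀ ∈ C := mem_connectedComponentIn hx₀
      have hCfib : C ⊆ rX ⁻¹' {(gX x₀ : X)} := by
        intro x hx
        have hxG : x ∉ GX := (connectedComponentIn_subset _ _) hx
        have h1 := hr2X x hxG
        have h2 := hr2X x₀ hx₀
        rw [← connectedComponentIn_eq hx] at h1
        rw [h2] at h1
        simp only [Set.mem_preimage, Set.mem_singleton_iff]
        exact (Set.singleton_eq_singleton_iff.mp h1).symm
      exact ((contfib (gX x₀)).mono hCfib).continuousAt (hCo.mem_nhds hx₀C)
  -- embedding
  have hemb : Topology.IsEmbedding F := (hcont.isClosedEmbedding hinj).toIsEmbedding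
  refine ⟨F, ⟨hemb, key2, key3⟩, ?_⟩
  rintro f' ⟨-, -, hf'3⟩
  funext x
  exact (hf'3 (gX x) ⟨x, hfibself x⟩).trans (key3 (gX x) ⟨x, hfibself x⟩).symm
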